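/- Let A > 0 be real, s real, t ≤ -(1+s²)/2. Then for the function ξ(u,v) = u + v/(u + A) + γ where γ = (A)/(2(1 + A² + √(1+A⁴))), the real part of ξ(is, t) is nonpositive, i.e., Re(is + t/(is + A) + γ) ≤ 0. -/

import Mathlib

/-!
Writing `ξ(is, t) = is + t/(is + A) + γ`, the real part is `t A / (A² + s²) + γ`. The bound on `t`
makes the first term at most `-(A/2) · (1 + s²)/(A² + s²)`, and `(1 + s²)/(A² + s²) ≥ 1/(1 + A²)`
uniformly in `s`, while `γ ≤ A / (2 (1 + A²))` since the square root is nonnegative.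
-/

theorem Complex.re_ofReal_div_I_mul_add_ofReal (t s A : ℝ) :
    ((t : ℂ) / (I * s + A)).re = t * A / (A ^ 2 + s ^ 2) := by
  simp only [div_re, ofReal_re, add_re, mul_re, I_re, zero_mul, I_im, ofReal_im, mul_zero,
    sub_self, zero_add, normSq_apply, add_im, mul_im, one_mul, add_zero, zero_div]
  ring

theorem inv_one_add_sq_le_div_sq_add_sq {A : ℝ} (hA : A ≠ 0) (s : ℝ) :
    (1 + A ^ 2)⁻¹ ≤ (1 + s ^ 2) / (A ^ 2 + s ^ 2) := by
  rw [inv_eq_one_div, div_le_div_iff₀ (by positivity) (by positivity)]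
  nlinarith [mul_nonneg (sq_nonneg s) (sq_nonneg A)]

open Complex in
theorem xi_re_nonpos (A : ℝ) (hA : 0 < A) (s t : ℝ) (ht : t ≤ -(1 + s^2)/2)
    (gamma : ℝ) (hg : gamma = A / (2 * (1 + A^2 + Real.sqrt (1 + A^4)))) :
    ((Complex.I * (s : ℂ) + (t : ℂ) / (Complex.I * (s : ℂ) + (A : ℂ)) + (gamma : ℂ)).re) ≤ 0 := by
  have hre : (I * s + t / (I * s + A) + gamma : ℂ).re = t * A / (A ^ 2 + s ^ 2) + gamma := by
    simp [re_ofReal_div_I_mul_add_ofReal]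
  have hgamma : gamma ≤ A / 2 * (1 + A ^ 2)⁻¹ := by
    rw [hg, ← div_eq_mul_inv, div_div]
    gcongr A / (2 * ?_)
    exact le_add_of_nonneg_right (Real.sqrt_nonneg _)
  have hterm : t * A / (A ^ 2 + s ^ 2) ≤ -(A / 2 * ((1 + s ^ 2) / (A ^ 2 + s ^ 2))) :=
    calc t * A / (A ^ 2 + s ^ 2) ≤ -(1 + s ^ 2) / 2 * A / (A ^ 2 + s ^ 2) := by gcongr
      _ = -(A / 2 * ((1 + s ^ 2) / (A ^ 2 + s ^ 2))) := by ring
  have hratio := mul_le_mul_of_nonneg_left (inv_one_add_sq_le_div_sq_add_sq hA.ne' s)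
    (half_pos hA).le
  rw [hre]
  linarith
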